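/- arXiv:math/0205089 — 3 statements merged into one kernel-verified Lean document; each statement's English description precedes it below -/
import Mathlib

section
/- The operation ⊙ on Θ is ℚ-bilinear, commutative, and associative: for all f, g, h ∈ Θ and c ∈ ℚ one has (c·f + g) ⊙ h = c·(f ⊙ h) + g ⊙ h, f ⊙ g = g ⊙ f, and (f ⊙ g) ⊙ h = f ⊙ (g ⊙ h). -/
variable {σ : Type*}

/-- Total degree of a monomial. -/
def monDeg (d : σ →₀ ℕ) : ℕ := d.sum fun _ n => n

/-- `Θ`: series whose coefficients vanish in degrees not divisible by `N`. -/
def InTheta (N : ℕ) (f : MvPowerSeries σ ℚ) : Prop :=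
  ∀ d : σ →₀ ℕ, ¬ (N ∣ monDeg d) → MvPowerSeries.coeff d f = 0

/-- `f^(k)`: homogeneous component of total degree `N * k`. -/
noncomputable def homComp (N : ℕ) (f : MvPowerSeries σ ℚ) (k : ℕ) : MvPowerSeries σ ℚ :=
  fun d => if monDeg d = N * k then MvPowerSeries.coeff d f else 0

/-- The operation `⊙`: `f ⊙ g = Σ_{k,ℓ} C(k+ℓ,k) f^(k) g^(ℓ)`, defined coefficientwise
(at a monomial of total degree `m`, only indices `k, ℓ ≤ m` can contribute, for `N ≥ 1`). -/
noncomputable def odot (N : ℕ) (f g : MvPowerSeries σ ℚ) : MvPowerSeries σ ℚ :=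
  fun d => ∑ k ∈ Finset.range (monDeg d + 1), ∑ l ∈ Finset.range (monDeg d + 1),
    ((k + l).choose k : ℚ) * MvPowerSeries.coeff d (homComp N f k * homComp N g l)

/-- The `E`-transform: `E f = Σ_k (q^k / k!) f^(k)`. -/
noncomputable def Etrans (N : ℕ) (f : MvPowerSeries σ ℚ) :
    PowerSeries (MvPowerSeries σ ℚ) :=
  PowerSeries.mk fun k => (k.factorial : ℚ)⁻¹ • homComp N f k

/-- `exp(q·u) = Σ_k (q^k / k!) u^k`. -/
noncomputable def expQ (u : MvPowerSeries σ ℚ) : PowerSeries (MvPowerSeries σ ℚ) :=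
  PowerSeries.mk fun k => (k.factorial : ℚ)⁻¹ • u ^ k

/-- A homogeneous polynomial of degree `N`: finitely many nonzero coefficients,
all in total degree exactly `N`. -/
def IsHomogDeg (N : ℕ) (a : MvPowerSeries σ ℚ) : Prop :=
  {d : σ →₀ ℕ | MvPowerSeries.coeff d a ≠ 0}.Finite ∧
    ∀ d : σ →₀ ℕ, MvPowerSeries.coeff d a ≠ 0 → monDeg d = N

/-- Iterated `⊙`-product of a nonempty list. -/
noncomputable def odotList (N : ℕ) : List (MvPowerSeries σ ℚ) → MvPowerSeries σ ℚ
  | [] => 1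
  | [f] => f
  | f :: g :: rest => odot N f (odotList N (g :: rest))

/-! The transform `E f = Σ_k (q^k / k!) f^(k)` turns `⊙` into the product of power series in `q`,
and it is injective on `Θ`, since `f ∈ Θ` is the sum of its components `f^(k)`. Associativity of `⊙`
is thus inherited from that of the product; bilinearity and commutativity can be read off the
coefficients directly. -/

open MvPowerSeries Finset

lemma monDeg_eq_degree (d : σ →₀ ℕ) : monDeg d = d.degree := rfl

lemma homComp_eq_homogeneousComponent (N : ℕ) (f : MvPowerSeries σ ℚ) (k : ℕ) :
    homComp N f k = homogeneousComponent (N * k) f := by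
  ext d
  rw [coeff_homogeneousComponent, ← monDeg_eq_degree]
  rfl

lemma coeff_homComp (N : ℕ) (f : MvPowerSeries σ ℚ) (k : ℕ) (d : σ →₀ ℕ) :
    coeff d (homComp N f k) = if monDeg d = N * k then coeff d f else 0 := rfl

lemma coeff_odot (N : ℕ) (f g : MvPowerSeries σ ℚ) (d : σ →₀ ℕ) :
    coeff d (odot N f g) = ∑ k ∈ range (monDeg d + 1), ∑ l ∈ range (monDeg d + 1),
      ((k + l).choose k : ℚ) * coeff d (homComp N f k * homComp N g l) := rfl

lemma isHomogeneous_homComp_mul_homComp (N : ℕ) (f g : MvPowerSeries σ ℚ) (k l : ℕ) :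
    (homComp N f k * homComp N g l).IsHomogeneous (N * (k + l)) := by
  rw [homComp_eq_homogeneousComponent, homComp_eq_homogeneousComponent, mul_add]
  exact IsHomogeneous.mul (isHomogeneous_homogeneousComponent f _)
    (isHomogeneous_homogeneousComponent g _)

lemma inTheta_odot (N : ℕ) (f g : MvPowerSeries σ ℚ) : InTheta N (odot N f g) := by
  intro d hd
  rw [coeff_odot]
  refine sum_eq_zero fun k _ => sum_eq_zero fun l _ => ?_
  rw [IsHomogeneous.coeff_eq_zero (isHomogeneous_homComp_mul_homComp N f g k l)
    fun h => hd ⟨k + l, h⟩, mul_zero]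

lemma coeff_odot_of_monDeg_eq {N : ℕ} (hN : 1 ≤ N) (f g : MvPowerSeries σ ℚ) {n : ℕ}
    {d : σ →₀ ℕ} (hd : monDeg d = N * n) :
    coeff d (odot N f g) =
      ∑ p ∈ antidiagonal n, (n.choose p.1 : ℚ) * coeff d (homComp N f p.1 * homComp N g p.2) := by
  have hn : n ≤ monDeg d := hd ▸ Nat.le_mul_of_pos_left n hN
  rw [coeff_odot, ← sum_product']
  refine (sum_subset (fun p hp => ?_) (fun p _ hp => ?_)).symm.trans
    (sum_congr rfl fun p hp => ?_)
  · rw [HasAntidiagonal.mem_antidiagonal] at hp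
    simp only [mem_product, mem_range]
    omega
  · rw [HasAntidiagonal.mem_antidiagonal] at hp
    rw [IsHomogeneous.coeff_eq_zero (isHomogeneous_homComp_mul_homComp N f g _ _), mul_zero]
    rw [← monDeg_eq_degree, hd]
    exact fun h => hp (Nat.eq_of_mul_eq_mul_left hN h).symm
  · rw [← HasAntidiagonal.mem_antidiagonal.mp hp]

lemma homComp_odot {N : ℕ} (hN : 1 ≤ N) (f g : MvPowerSeries σ ℚ) (n : ℕ) :
    homComp N (odot N f g) n =
      ∑ p ∈ antidiagonal n, (n.choose p.1 : ℚ) • (homComp N f p.1 * homComp N g p.2) := by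
  ext d
  simp only [coeff_homComp, map_sum, map_smul, smul_eq_mul]
  split_ifs with hd
  · exact coeff_odot_of_monDeg_eq hN f g hd
  · refine (sum_eq_zero fun p hp => ?_).symm
    rw [IsHomogeneous.coeff_eq_zero (isHomogeneous_homComp_mul_homComp N f g _ _), mul_zero]
    rwa [← monDeg_eq_degree, HasAntidiagonal.mem_antidiagonal.mp hp]

/-- Termwise this is `C(k + l, k) / (k + l)! = 1 / (k! l!)`. -/
lemma etrans_odot {N : ℕ} (hN : 1 ≤ N) (f g : MvPowerSeries σ ℚ) :
    Etrans N (odot N f g) = Etrans N f * Etrans N g := by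
  ext n : 1
  simp only [Etrans, PowerSeries.coeff_mul, PowerSeries.coeff_mk, homComp_odot hN, smul_sum,
    smul_mul_smul_comm, smul_smul]
  refine sum_congr rfl fun p hp => ?_
  rw [← HasAntidiagonal.mem_antidiagonal.mp hp, Nat.cast_add_choose]
  congr 1
  field_simp

lemma homComp_eq_factorial_smul_coeff_etrans (N : ℕ) (f : MvPowerSeries σ ℚ) (k : ℕ) :
    homComp N f k = (k.factorial : ℚ) • PowerSeries.coeff k (Etrans N f) := by
  rw [Etrans, PowerSeries.coeff_mk, smul_smul, mul_inv_cancel₀ (by positivity), one_smul]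

lemma eq_of_forall_homComp_eq {N : ℕ} {f g : MvPowerSeries σ ℚ} (hf : InTheta N f)
    (hg : InTheta N g) (h : ∀ k, homComp N f k = homComp N g k) : f = g := by
  ext d
  by_cases hd : N ∣ monDeg d
  · obtain ⟨k, hk⟩ := hd
    simpa only [coeff_homComp, if_pos hk] using congrArg (coeff d) (h k)
  · rw [hf d hd, hg d hd]

lemma etrans_injOn (N : ℕ) : Set.InjOn (Etrans N) {f : MvPowerSeries σ ℚ | InTheta N f} :=
  fun f hf g hg h => eq_of_forall_homComp_eq hf hg fun k => by
    rw [homComp_eq_factorial_smul_coeff_etrans, homComp_eq_factorial_smul_coeff_etrans, h]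

lemma homComp_smul_add (N : ℕ) (c : ℚ) (f g : MvPowerSeries σ ℚ) (k : ℕ) :
    homComp N (c • f + g) k = c • homComp N f k + homComp N g k := by
  simp only [homComp_eq_homogeneousComponent, map_add, map_smul]

lemma odot_smul_add (N : ℕ) (c : ℚ) (f g h : MvPowerSeries σ ℚ) :
    odot N (c • f + g) h = c • odot N f h + odot N g h := by
  ext d
  simp only [coeff_odot, homComp_smul_add, add_mul, smul_mul_assoc, map_add, map_smul,
    smul_eq_mul, mul_add, sum_add_distrib, mul_sum, mul_left_comm c]

lemma odot_comm (N : ℕ) (f g : MvPowerSeries σ ℚ) : odot N f g = odot N g f := by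
  ext d
  rw [coeff_odot, coeff_odot, sum_comm]
  refine sum_congr rfl fun k _ => sum_congr rfl fun l _ => ?_
  rw [mul_comm (homComp N f l), Nat.choose_symm_add, Nat.add_comm l k]

lemma odot_assoc {N : ℕ} (hN : 1 ≤ N) (f g h : MvPowerSeries σ ℚ) :
    odot N (odot N f g) h = odot N f (odot N g h) :=
  etrans_injOn N (inTheta_odot N _ _) (inTheta_odot N _ _) <| by
    simp only [etrans_odot hN, mul_assoc]

theorem odot_bilinear_comm_assoc_general {σ : Type*} (N : ℕ) (hN : 1 ≤ N)
    (f g h : MvPowerSeries σ ℚ)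
    (c : ℚ) :
    odot N (c • f + g) h = c • odot N f h + odot N g h ∧
    odot N f g = odot N g f ∧
    odot N (odot N f g) h = odot N f (odot N g h) :=
  ⟨odot_smul_add N c f g h, odot_comm N f g, odot_assoc hN f g h⟩

/-- `⊙` is ℚ-bilinear, commutative and associative on `Θ`. -/
theorem odot_bilinear_comm_assoc {σ : Type*} (N : ℕ) (hN : 1 ≤ N)
    (f g h : MvPowerSeries σ ℚ) (hf : InTheta N f) (hg : InTheta N g) (hh : InTheta N h)
    (c : ℚ) :
    odot N (c • f + g) h = c • odot N f h + odot N g h ∧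
    odot N f g = odot N g f ∧
    odot N (odot N f g) h = odot N f (odot N g h) :=
  odot_bilinear_comm_assoc_general N hN f g h c
end

section
/- Let r ≥ 1 and let u_1, …, u_r ∈ Θ be pairwise distinct homogeneous polynomials of degree N, so that each 1 − u_i is invertible in MvPowerSeries σ ℚ. Then, with denominators cleared, (∏_{1 ≤ p < q ≤ r} (u_q − u_p)) · E(∏_{i=1}^r (1 − u_i)^{-1}) = Σ_{i=1}^r (−1)^{r−i} · u_i^{r−1} · exp(q·u_i) · ∏_{1 ≤ p < q ≤ r, p ≠ i, q ≠ i} (u_q − u_p), where exp(q·u) denotes Σ_{k ≥ 0} (q^k / k!) · u^k. (In the case r = 1 this reads E((1 − u_1)^{-1}) = exp(q·u_1).) -/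
variable {σ : Type*}

/-!
Write `φ f = Σ_k f^(k) t^k`. Since each `u_i` is homogeneous of degree `N ≥ 1`,
`φ ((1 - u_i) g) = (1 - u_i t) φ g`, hence `φ (∏ (1 - u_i)⁻¹) = ∏ (1 - u_i t)⁻¹`.
With `V(a) = ∏_{p<q} (a_q - a_p)` and `V_i(a)` the same product over the pairs avoiding `i`,
the partial fraction identity `V(a) = Σ_i (-1)^(r-1-i) a_i^(r-1) V_i(a) ∏_{j ≠ i} (1 - a_j t)`
holds for distinct nonzero `a_i` in a field (both sides have degree `< r` and agree at the
`r` points `t = 1/a_i`), hence for generic variables, hence in every commutative ring.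
Multiplied by `∏ (1 - u_i t)⁻¹` it writes `V(u) φ(∏ (1 - u_i)⁻¹)` as `Σ_i c_i (1 - u_i t)⁻¹`.
Dividing the `k`-th coefficient by `k!` is linear over the coefficient ring and sends `φ f` to
`E f` and `(1 - u t)⁻¹` to `exp(q u)`.
-/

open Finset

section Vandermonde

open Polynomial

variable {R : Type*} [CommRing R] {r : ℕ}

def vandermondeProd (a : Fin r → R) : R :=
  ∏ p ∈ univ.filter (fun p : Fin r × Fin r => p.1 < p.2), (a p.2 - a p.1)

def vandermondeProdErase (a : Fin r → R) (i : Fin r) : R :=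
  ∏ p ∈ univ.filter (fun p : Fin r × Fin r => p.1 < p.2 ∧ p.1 ≠ i ∧ p.2 ≠ i), (a p.2 - a p.1)

lemma vandermondeProd_eq_mul_vandermondeProdErase (a : Fin r → R) (i : Fin r) :
    vandermondeProd a =
      vandermondeProdErase a i * ((∏ j ∈ Iio i, (a i - a j)) * ∏ j ∈ Ioi i, (a j - a i)) := by
  classical
  have hpairs : (univ.filter fun p : Fin r × Fin r => p.1 < p.2).filter
      (fun p => ¬(p.1 ≠ i ∧ p.2 ≠ i)) = (Iio i).image (·, i) ∪ (Ioi i).image (i, ·) := by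
    ext ⟨p, q⟩
    simp only [mem_filter, mem_univ, true_and, mem_union, mem_image, mem_Iio, mem_Ioi,
      Prod.mk.injEq]
    grind
  have hdisj : Disjoint ((Iio i).image (·, i)) ((Ioi i).image (i, ·)) := by
    simp only [disjoint_left, mem_image, mem_Iio, mem_Ioi]
    grind
  rw [vandermondeProd, vandermondeProdErase, ← prod_filter_mul_prod_filter_not _
    (fun p : Fin r × Fin r => p.1 ≠ i ∧ p.2 ≠ i), filter_filter, hpairs, prod_union hdisj,
    prod_image (fun _ _ _ _ h => (Prod.mk.inj h).1),
    prod_image (fun _ _ _ _ h => (Prod.mk.inj h).2)]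

lemma neg_one_pow_mul_vandermondeProd (a : Fin r → R) (i : Fin r) :
    (-1) ^ (r - 1 - i : ℕ) * vandermondeProd a =
      vandermondeProdErase a i * ∏ j ∈ univ.erase i, (a i - a j) := by
  have herase : univ.erase i = Iio i ∪ Ioi i := by ext; simp
  have hdisj : Disjoint (Iio i) (Ioi i) := by
    simp only [disjoint_left, mem_Iio, mem_Ioi]
    exact fun _ h h' => (h.trans h').false
  have hIoi : ∏ j ∈ Ioi i, (a i - a j) = (-1) ^ (r - 1 - i : ℕ) * ∏ j ∈ Ioi i, (a j - a i) := by
    simp_rw [← neg_sub (a _) (a i), prod_neg, Fin.card_Ioi]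
  rw [herase, prod_union hdisj, hIoi, vandermondeProd_eq_mul_vandermondeProdErase a i]
  ring

lemma C_vandermondeProd_eq_sum_of_injective {K : Type*} [Field K] (hr : 1 ≤ r) (b : Fin r → K)
    (hb0 : ∀ i, b i ≠ 0) (hb : Function.Injective b) :
    C (vandermondeProd b) = ∑ i : Fin r, C ((-1) ^ (r - 1 - i : ℕ) * b i ^ (r - 1) *
      vandermondeProdErase b i) * ∏ j ∈ univ.erase i, (1 - C (b j) * X) := by
  have hcard : (#(univ : Finset (Fin r)) : WithBot ℕ) = r := by simp
  refine eq_of_degrees_lt_of_eval_index_eq (v := fun i => (b i)⁻¹) univ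
    (fun i _ j _ h => hb (inv_injective h)) ?_ ?_ fun m _ => ?_
  · rw [hcard]
    exact degree_C_le.trans_lt (by exact_mod_cast (by omega : 0 < r))
  · have hdeg : (∑ i : Fin r, C ((-1) ^ (r - 1 - i : ℕ) * b i ^ (r - 1) *
        vandermondeProdErase b i) * ∏ j ∈ univ.erase i, (1 - C (b j) * X)).natDegree ≤ r - 1 := by
      refine natDegree_sum_le_of_forall_le _ _ fun i _ =>
        (natDegree_C_mul_le _ _).trans <| (natDegree_prod_le _ _).trans ?_
      refine (sum_le_card_nsmul _ _ 1 fun j _ => ?_).trans (by simp)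
      compute_degree
    rw [hcard]
    exact (degree_le_of_natDegree_le hdeg).trans_lt (by exact_mod_cast (by omega : r - 1 < r))
  have hfactor : b m ^ (r - 1) * ∏ j ∈ univ.erase m, (1 - b j * (b m)⁻¹) =
      ∏ j ∈ univ.erase m, (b m - b j) := by
    have hcard' : #(univ.erase m) = r - 1 := by simp
    rw [← hcard', ← prod_const, ← prod_mul_distrib]
    refine prod_congr rfl fun j _ => ?_
    rw [mul_sub, mul_one, mul_left_comm, mul_inv_cancel₀ (hb0 m), mul_one]
  have hsq : ((-1 : K) ^ (r - 1 - m : ℕ)) ^ 2 = 1 := by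
    rw [← pow_mul, mul_comm, pow_mul, neg_one_sq, one_pow]
  simp only [eval_C, eval_finsetSum, eval_mul, eval_prod, eval_sub, eval_one, eval_X]
  rw [sum_eq_single m (fun i _ him => ?_) (by simp)]
  · linear_combination (-vandermondeProd b) * hsq +
      (-1) ^ (r - 1 - m : ℕ) * neg_one_pow_mul_vandermondeProd b m -
      (-1) ^ (r - 1 - m : ℕ) * vandermondeProdErase b m * hfactor
  · have hvanish : 1 - b m * (b m)⁻¹ = 0 := by rw [mul_inv_cancel₀ (hb0 m), sub_self]
    rw [prod_eq_zero (mem_erase.mpr ⟨Ne.symm him, mem_univ m⟩) hvanish, mul_zero]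

lemma C_vandermondeProd_eq_sum (hr : 1 ≤ r) (a : Fin r → R) :
    C (vandermondeProd a) = ∑ i : Fin r, C ((-1) ^ (r - 1 - i : ℕ) * a i ^ (r - 1) *
      vandermondeProdErase a i) * ∏ j ∈ univ.erase i, (1 - C (a j) * X) := by
  set A := MvPolynomial (Fin r) ℤ
  have hinj : Function.Injective (algebraMap A (FractionRing A)) := IsFractionRing.injective _ _
  have generic : C (vandermondeProd (MvPolynomial.X : Fin r → A)) =
      ∑ i : Fin r, C ((-1) ^ (r - 1 - i : ℕ) * MvPolynomial.X i ^ (r - 1) *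
        vandermondeProdErase MvPolynomial.X i) *
        ∏ j ∈ univ.erase i, (1 - C (MvPolynomial.X j) * X) := by
    apply map_injective _ hinj
    simpa only [vandermondeProd, vandermondeProdErase, Polynomial.map_C, Polynomial.map_sum,
      Polynomial.map_mul, Polynomial.map_prod, Polynomial.map_sub, Polynomial.map_one,
      Polynomial.map_X, Polynomial.map_pow, Polynomial.map_neg, map_prod, map_mul, map_sub,
      map_pow, map_neg, map_one] using
      C_vandermondeProd_eq_sum_of_injective hr (fun i => algebraMap A (FractionRing A) (.X i))
        (fun i => (map_ne_zero_iff _ hinj).mpr (MvPolynomial.X_ne_zero i))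
        (hinj.comp MvPolynomial.X_injective)
  simpa only [vandermondeProd, vandermondeProdErase, Polynomial.map_C, Polynomial.map_sum,
      Polynomial.map_mul, Polynomial.map_prod, Polynomial.map_sub, Polynomial.map_one,
      Polynomial.map_X, Polynomial.map_pow, Polynomial.map_neg, map_prod, map_mul, map_sub,
      map_pow, map_neg, map_one, MvPolynomial.eval₂Hom_X'] using
    congrArg (map (MvPolynomial.eval₂Hom (Int.castRingHom R) a)) generic

end Vandermonde

section PowerSeries

open PowerSeries

variable {R : Type*} [CommRing R]

lemma one_sub_C_mul_X_mul_rescale_mk_one (a : R) : (1 - C a * X) * rescale a (mk 1) = 1 := by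
  rw [← rescale_X, ← map_one (rescale a), ← map_sub, ← map_mul, mul_comm,
    mk_one_mul_one_sub_eq_one, map_one]

lemma C_vandermondeProd_mul_prod_rescale_mk_one {r : ℕ} (hr : 1 ≤ r) (a : Fin r → R) :
    C (vandermondeProd a) * ∏ j, rescale (a j) (mk 1) = ∑ i : Fin r,
      C ((-1) ^ (r - 1 - i : ℕ) * a i ^ (r - 1) * vandermondeProdErase a i) *
        rescale (a i) (mk 1) := by
  have h := congrArg Polynomial.coeToPowerSeries.ringHom (C_vandermondeProd_eq_sum hr a)
  simp only [map_sum, map_mul Polynomial.coeToPowerSeries.ringHom,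
    map_prod Polynomial.coeToPowerSeries.ringHom, Polynomial.coeToPowerSeries.ringHom_apply,
    Polynomial.coe_sub, Polynomial.coe_one, Polynomial.coe_mul, Polynomial.coe_C,
    Polynomial.coe_X] at h
  have hcancel (i : Fin r) :
      (∏ j ∈ univ.erase i, (1 - C (a j) * X)) * ∏ j ∈ univ.erase i, rescale (a j) (mk 1) = 1 := by
    rw [← prod_mul_distrib]
    exact prod_eq_one fun j _ => one_sub_C_mul_X_mul_rescale_mk_one (a j)
  rw [h, sum_mul]
  refine sum_congr rfl fun i _ => ?_
  rw [← mul_prod_erase univ _ (mem_univ i)]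
  linear_combination (C ((-1) ^ (r - 1 - i : ℕ) * a i ^ (r - 1) * vandermondeProdErase a i) *
    rescale (a i) (mk 1)) * hcancel i

variable (A : Type*) [CommRing A] [Algebra ℚ A]

noncomputable def borelTransform : PowerSeries A →ₗ[A] PowerSeries A where
  toFun f := mk fun k => (k.factorial : ℚ)⁻¹ • coeff k f
  map_add' f g := by ext; simp
  map_smul' a f := by ext; simp

variable {A}

lemma borelTransform_C_mul (a : A) (f : PowerSeries A) :
    borelTransform A (C a * f) = C a * borelTransform A f := by
  rw [← smul_eq_C_mul, map_smul, smul_eq_C_mul]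

lemma expQ_eq_borelTransform (u : MvPowerSeries σ ℚ) :
    expQ u = borelTransform _ (rescale u (mk 1)) := by
  ext1 k
  simp [expQ, borelTransform, coeff_rescale]

end PowerSeries

namespace MvPowerSeries

variable {R : Type*} [CommRing R]

lemma IsHomogeneous.degree_eq {u : MvPowerSeries σ R} {p : ℕ} (hu : u.IsHomogeneous p)
    {d : σ →₀ ℕ} (hd : coeff d u ≠ 0) : d.degree = p := by
  rw [Finsupp.degree_eq_weight_one]
  exact hu hd

lemma IsHomogeneous.constantCoeff_eq_zero {u : MvPowerSeries σ R} {p : ℕ}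
    (hu : u.IsHomogeneous p) (hp : 0 < p) : constantCoeff u = 0 := by
  by_contra h
  rw [← coeff_zero_eq_constantCoeff_apply] at h
  have h0 := hu.degree_eq h
  rw [map_zero] at h0
  omega

lemma IsHomogeneous.coeff_homogeneousComponent_mul [DecidableEq σ] {u : MvPowerSeries σ R}
    {p : ℕ} (hu : u.IsHomogeneous p) (g : MvPowerSeries σ R) (n : ℕ) (d : σ →₀ ℕ) :
    coeff d (homogeneousComponent n (u * g)) =
      ∑ e ∈ antidiagonal d, coeff e.1 u * if p + e.2.degree = n then coeff e.2 g else 0 := by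
  have hterm : ∀ e ∈ antidiagonal d,
      coeff e.1 u * (if p + e.2.degree = n then coeff e.2 g else 0) =
        if d.degree = n then coeff e.1 u * coeff e.2 g else 0 := by
    intro e he
    by_cases he1 : coeff e.1 u = 0
    · simp [he1]
    · rw [← mem_antidiagonal.mp he, map_add, hu.degree_eq he1, mul_ite, mul_zero]
  rw [sum_congr rfl hterm, sum_ite_irrel, sum_const_zero, coeff_homogeneousComponent, coeff_mul]

lemma IsHomogeneous.homogeneousComponent_add_mul {u : MvPowerSeries σ R} {p : ℕ}
    (hu : u.IsHomogeneous p) (g : MvPowerSeries σ R) (n : ℕ) :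
    homogeneousComponent (p + n) (u * g) = u * homogeneousComponent n g := by
  classical
  ext d
  simp only [hu.coeff_homogeneousComponent_mul, add_right_inj, coeff_mul,
    coeff_homogeneousComponent]

lemma IsHomogeneous.homogeneousComponent_mul_of_lt {u : MvPowerSeries σ R} {p : ℕ}
    (hu : u.IsHomogeneous p) (g : MvPowerSeries σ R) {n : ℕ} (hn : n < p) :
    homogeneousComponent n (u * g) = 0 := by
  classical
  ext d
  rw [hu.coeff_homogeneousComponent_mul, map_zero]
  exact sum_eq_zero fun e _ => by rw [if_neg (by omega), mul_zero]

lemma homogeneousComponent_one (n : ℕ) :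
    homogeneousComponent n (1 : MvPowerSeries σ R) = if n = 0 then 1 else 0 := by
  classical
  ext d
  by_cases hd : d = 0 <;> by_cases hn : n = 0 <;>
    simp [coeff_homogeneousComponent, coeff_one, Finsupp.degree_eq_zero_iff, hd, hn,
      eq_comm (a := 0)]

noncomputable def homogeneousSeries (N : ℕ) (f : MvPowerSeries σ R) :
    PowerSeries (MvPowerSeries σ R) :=
  PowerSeries.mk fun k => homogeneousComponent (N * k) f

lemma homogeneousSeries_sub (N : ℕ) (f g : MvPowerSeries σ R) :
    homogeneousSeries N (f - g) = homogeneousSeries N f - homogeneousSeries N g := by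
  ext1 k
  simp [homogeneousSeries]

lemma homogeneousSeries_one {N : ℕ} (hN : 0 < N) :
    homogeneousSeries N (1 : MvPowerSeries σ R) = 1 := by
  ext1 k
  simp [homogeneousSeries, homogeneousComponent_one, PowerSeries.coeff_one, hN.ne']

lemma IsHomogeneous.homogeneousSeries_mul {N : ℕ} (hN : 0 < N) {u : MvPowerSeries σ R}
    (hu : u.IsHomogeneous N) (g : MvPowerSeries σ R) :
    homogeneousSeries N (u * g) = PowerSeries.C u * PowerSeries.X * homogeneousSeries N g := by
  ext1 k
  rw [mul_right_comm]
  rcases k with _ | k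
  · simp [homogeneousSeries, hu.homogeneousComponent_mul_of_lt g hN]
  · simp [homogeneousSeries, mul_add_one, add_comm _ N, hu.homogeneousComponent_add_mul,
      PowerSeries.coeff_succ_mul_X]

lemma homogeneousSeries_prod_one_sub_mul {N : ℕ} (hN : 0 < N) {ι : Type*} (s : Finset ι)
    (u : ι → MvPowerSeries σ R) (hu : ∀ i ∈ s, (u i).IsHomogeneous N) (g : MvPowerSeries σ R) :
    homogeneousSeries N ((∏ i ∈ s, (1 - u i)) * g) =
      (∏ i ∈ s, (1 - PowerSeries.C (u i) * PowerSeries.X)) * homogeneousSeries N g := by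
  classical
  induction s using Finset.induction_on with
  | empty => simp
  | insert a s ha ih =>
    rw [prod_insert ha, prod_insert ha, mul_assoc, sub_mul, one_mul, homogeneousSeries_sub,
      IsHomogeneous.homogeneousSeries_mul hN (hu a (mem_insert_self a s)),
      ih fun i hi => hu i (mem_insert_of_mem hi)]
    ring

lemma homogeneousSeries_prod_inv_one_sub {k : Type*} [Field k] {N : ℕ} (hN : 0 < N)
    {ι : Type*} (s : Finset ι) (u : ι → MvPowerSeries σ k)
    (hu : ∀ i ∈ s, (u i).IsHomogeneous N) :
    homogeneousSeries N (∏ i ∈ s, (1 - u i)⁻¹) =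
      ∏ i ∈ s, PowerSeries.rescale (u i) (PowerSeries.mk 1) := by
  have hinv : (∏ i ∈ s, (1 - u i)) * ∏ i ∈ s, (1 - u i)⁻¹ = 1 := by
    rw [← prod_mul_distrib]
    refine prod_eq_one fun i hi => MvPowerSeries.mul_inv_cancel _ ?_
    simp [IsHomogeneous.constantCoeff_eq_zero (hu i hi) hN]
  refine (left_inv_eq_right_inv (a := ∏ i ∈ s, (1 - PowerSeries.C (u i) * PowerSeries.X))
    ?_ ?_).symm
  · rw [← prod_mul_distrib]
    exact prod_eq_one fun i _ => by rw [mul_comm, one_sub_C_mul_X_mul_rescale_mk_one]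
  · rw [← homogeneousSeries_prod_one_sub_mul hN s u hu, hinv, homogeneousSeries_one hN]

end MvPowerSeries

lemma IsHomogDeg.isHomogeneous {N : ℕ} {u : MvPowerSeries σ ℚ} (hu : IsHomogDeg N u) :
    u.IsHomogeneous N := by
  intro d hd
  show Finsupp.weight (fun _ => 1) d = N
  rw [← Finsupp.degree_eq_weight_one]
  exact hu.2 d hd

lemma Etrans_eq_borelTransform (N : ℕ) (f : MvPowerSeries σ ℚ) :
    Etrans N f = borelTransform _ (MvPowerSeries.homogeneousSeries N f) := by
  have hcomp (k : ℕ) : homComp N f k = MvPowerSeries.homogeneousComponent (N * k) f := by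
    ext d
    rw [MvPowerSeries.coeff_homogeneousComponent]
    rfl
  ext1 k
  simp [Etrans, borelTransform, MvPowerSeries.homogeneousSeries, hcomp]

/-- Indices run over `Fin r`: `i` stands for the paper's `i + 1`, whence the sign
`(-1) ^ (r - 1 - i)`. -/
theorem Etrans_prod_inv_one_sub_general {σ : Type*} (N : ℕ) (hN : 1 ≤ N) (r : ℕ) (hr : 1 ≤ r)
    (u : Fin r → MvPowerSeries σ ℚ) (hu : ∀ i, IsHomogDeg N (u i)) :
    PowerSeries.C
        (∏ p ∈ Finset.univ.filter (fun p : Fin r × Fin r => p.1 < p.2), (u p.2 - u p.1)) *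
      Etrans N (∏ i, (1 - u i)⁻¹) =
    ∑ i : Fin r, (-1 : PowerSeries (MvPowerSeries σ ℚ)) ^ (r - 1 - (i : ℕ)) *
      PowerSeries.C
        (u i ^ (r - 1) *
          ∏ p ∈ Finset.univ.filter
              (fun p : Fin r × Fin r => p.1 < p.2 ∧ p.1 ≠ i ∧ p.2 ≠ i),
            (u p.2 - u p.1)) *
      expQ (u i) := by
  have hseries := MvPowerSeries.homogeneousSeries_prod_inv_one_sub hN univ u
    fun i _ => (hu i).isHomogeneous
  calc PowerSeries.C (vandermondeProd u) * Etrans N (∏ i, (1 - u i)⁻¹)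
      = borelTransform _ (PowerSeries.C (vandermondeProd u) *
          MvPowerSeries.homogeneousSeries N (∏ i, (1 - u i)⁻¹)) := by
        rw [Etrans_eq_borelTransform, borelTransform_C_mul]
    _ = ∑ i : Fin r, borelTransform _ (PowerSeries.C ((-1) ^ (r - 1 - i : ℕ) * u i ^ (r - 1) *
          vandermondeProdErase u i) * PowerSeries.rescale (u i) (PowerSeries.mk 1)) := by
        rw [hseries, C_vandermondeProd_mul_prod_rescale_mk_one hr u, map_sum]
    _ = _ := sum_congr rfl fun i _ => by
        rw [borelTransform_C_mul, ← expQ_eq_borelTransform, mul_assoc, map_mul, map_pow,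
          map_neg, map_one]
        rfl

/-- with denominators cleared,
`(∏_{p<q} (u_q - u_p)) · E(∏_i (1-u_i)⁻¹)
  = Σ_i (-1)^{r-i} u_i^{r-1} exp(q·u_i) ∏_{p<q, p,q≠i} (u_q - u_p)`
(indices `1,…,r`; here `i : Fin r` corresponds to `i+1`, so the sign is `(-1)^(r-1-i)`). -/
theorem Etrans_prod_inv_one_sub {σ : Type*} (N : ℕ) (hN : 1 ≤ N) (r : ℕ) (hr : 1 ≤ r)
    (u : Fin r → MvPowerSeries σ ℚ) (hu : ∀ i, IsHomogDeg N (u i))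
    (huinj : Function.Injective u) :
    PowerSeries.C
        (∏ p ∈ Finset.univ.filter (fun p : Fin r × Fin r => p.1 < p.2), (u p.2 - u p.1)) *
      Etrans N (∏ i, (1 - u i)⁻¹) =
    ∑ i : Fin r, (-1 : PowerSeries (MvPowerSeries σ ℚ)) ^ (r - 1 - (i : ℕ)) *
      PowerSeries.C
        (u i ^ (r - 1) *
          ∏ p ∈ Finset.univ.filter
              (fun p : Fin r × Fin r => p.1 < p.2 ∧ p.1 ≠ i ∧ p.2 ≠ i),
            (u p.2 - u p.1)) *
      expQ (u i) :=
  Etrans_prod_inv_one_sub_general N hN r hr u hu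
end

section
/- Let u_1, u_2, v_1, v_2, b ∈ Θ be homogeneous polynomials of degree N such that the four sums u_i + v_j (1 ≤ i, j ≤ 2) are pairwise distinct. Then ((1 − u_1)^{-1}(1 − u_2)^{-1}) ⊙ (b · (1 − v_1)^{-1}(1 − v_2)^{-1}) = b · (1 − u_1u_2 − v_1 − v_2 + v_1v_2) · ∏_{i,j=1}^2 (1 − u_i − v_j)^{-1}. -/
variable {σ : Type*}

/-!
Write a series of `Θ` as `∑ₙ cₙ` with `cₙ` homogeneous of degree `N n`. Then `⊙` is the
binomial convolution `(f ⊙ g)ₙ = ∑_{k+l=n} C(n,k) f_k g_l`, and `(1 - u)⁻¹` has components `uⁿ`.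
The factors have components `h_k(u₁,u₂) = ∑_{i+j=k} u₁ⁱu₂ʲ` and `b h_{l-1}(v₁,v₂)`, and
`(u₁ - u₂) h_k(u₁,u₂) = u₁^{k+1} - u₂^{k+1}`. So after multiplication by `(u₁ - u₂)(v₁ - v₂)` the
binomial theorem turns the `n`-th component of the left side into
`b (u₁(u₁+v₁)ⁿ - u₂(u₂+v₁)ⁿ - u₁(u₁+v₂)ⁿ + u₂(u₂+v₂)ⁿ)`, the `n`-th component of
`b (u₁(1-u₁-v₁)⁻¹ - u₂(1-u₂-v₁)⁻¹ - u₁(1-u₁-v₂)⁻¹ + u₂(1-u₂-v₂)⁻¹)`. A partial fraction identity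
identifies this with `(u₁ - u₂)(v₁ - v₂)` times the right side, and the factor cancels because
`u₁ ≠ u₂`, `v₁ ≠ v₂` and power series over `ℚ` form a domain.
-/

open Finset MvPowerSeries

namespace MvPowerSeries

variable {R : Type*} [CommSemiring R] {f : MvPowerSeries σ R} {p : ℕ}

theorem IsHomogeneous.of_coeff_eq_zero (h : ∀ d : σ →₀ ℕ, d.degree ≠ p → coeff d f = 0) :
    f.IsHomogeneous p := by
  intro d hd
  have hw : (Finsupp.weight 1 : (σ →₀ ℕ) →+ ℕ) = Finsupp.degree :=
    Finsupp.degree_eq_weight_one.symm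
  rw [hw]
  exact not_imp_comm.1 (h d) hd

theorem isHomogeneous_zero (p : ℕ) : (0 : MvPowerSeries σ R).IsHomogeneous p := by
  apply IsHomogeneous.of_coeff_eq_zero
  exact fun _ _ => map_zero _

theorem isHomogeneous_one : (1 : MvPowerSeries σ R).IsHomogeneous 0 := by
  classical
  apply IsHomogeneous.of_coeff_eq_zero
  intro d hd
  rw [coeff_one, if_neg (by rintro rfl; simp at hd)]

theorem IsHomogeneous.pow (hf : f.IsHomogeneous p) (n : ℕ) : (f ^ n).IsHomogeneous (p * n) := by
  induction n with
  | zero => rw [pow_zero, mul_zero]; exact isHomogeneous_one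
  | succ n ih => rw [pow_succ, Nat.mul_succ]; exact ih.mul hf

theorem IsHomogeneous.nsmul (hf : f.IsHomogeneous p) (m : ℕ) : (m • f).IsHomogeneous p := by
  apply IsHomogeneous.of_coeff_eq_zero
  exact fun _ hd => by rw [map_nsmul, hf.coeff_eq_zero hd, smul_zero]

theorem isHomogeneous_sum {ι : Type*} (s : Finset ι) (F : ι → MvPowerSeries σ R)
    (h : ∀ i ∈ s, (F i).IsHomogeneous p) : (∑ i ∈ s, F i).IsHomogeneous p := by
  apply IsHomogeneous.of_coeff_eq_zero
  intro d hd
  rw [map_sum]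
  exact sum_eq_zero fun i hi => IsHomogeneous.coeff_eq_zero (h i hi) hd

theorem IsHomogeneous.coeff_eq_zero_of_lt (hf : f.IsHomogeneous p) {d : σ →₀ ℕ}
    (hd : d.degree < p) : coeff d f = 0 :=
  hf.coeff_eq_zero hd.ne

theorem IsHomogeneous.constantCoeff_eq_zero_s12 (hf : f.IsHomogeneous p) (hp : p ≠ 0) :
    constantCoeff f = 0 := by
  rw [← coeff_zero_eq_constantCoeff_apply]
  exact hf.coeff_eq_zero (by simpa using hp.symm)

theorem IsHomogeneous.constantCoeff_one_sub_ne_zero {k : Type*} [Field k]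
    {u : MvPowerSeries σ k} (hu : u.IsHomogeneous p) (hp : p ≠ 0) :
    constantCoeff (1 - u) ≠ 0 := by
  simp [hu.constantCoeff_eq_zero_s12 hp]

end MvPowerSeries

theorem IsHomogDeg.isHomogeneous_s12 {N : ℕ} {a : MvPowerSeries σ ℚ} (h : IsHomogDeg N a) :
    a.IsHomogeneous N := by
  apply MvPowerSeries.IsHomogeneous.of_coeff_eq_zero
  exact fun d hd => not_imp_comm.1 (h.2 d) hd

theorem sum_range_sum_range_eq_sum_antidiagonal {M : Type*} [AddCommMonoid M] (m : ℕ)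
    (G : ℕ → ℕ → M) (hG : ∀ k l, m < k + l → G k l = 0) :
    ∑ k ∈ range (m + 1), ∑ l ∈ range (m + 1), G k l =
      ∑ n ∈ range (m + 1), ∑ p ∈ antidiagonal n, G p.1 p.2 := by
  simp_rw [Nat.sum_antidiagonal_eq_sum_range_succ_mk, sum_range_diag_flip]
  refine sum_congr rfl fun k hk => (sum_subset (range_subset_range.2 (by omega))
    fun l hl hl' => hG k l ?_).symm
  simp only [mem_range] at hk hl hl'
  omega

theorem sub_mul_sum_antidiagonal_pow_mul_pow {R : Type*} [CommRing R] (x y : R) (n : ℕ) :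
    (x - y) * ∑ p ∈ antidiagonal n, x ^ p.1 * y ^ p.2 = x ^ (n + 1) - y ^ (n + 1) := by
  rw [Nat.sum_antidiagonal_eq_sum_range_succ_mk, mul_comm]
  simpa using geom_sum₂_mul x y (n + 1)

def shiftUp {M : Type*} [Zero M] (c : ℕ → M) : ℕ → M
  | 0 => 0
  | n + 1 => c n

theorem sub_mul_shiftUp_sum_antidiagonal_pow_mul_pow {R : Type*} [CommRing R] (x y : R)
    (n : ℕ) :
    (x - y) * shiftUp (fun m => ∑ p ∈ antidiagonal m, x ^ p.1 * y ^ p.2) n = x ^ n - y ^ n := by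
  cases n with
  | zero => simp [shiftUp]
  | succ n => exact sub_mul_sum_antidiagonal_pow_mul_pow x y n

theorem sub_mul_sub_mul_sum_antidiagonal_choose {R : Type*} [CommRing R] {x y z w b : R}
    {f g : ℕ → R} (hf : ∀ i, (x - y) * f i = x ^ (i + 1) - y ^ (i + 1))
    (hg : ∀ j, (z - w) * g j = b * (z ^ j - w ^ j)) (n : ℕ) :
    (x - y) * (z - w) * ∑ p ∈ antidiagonal n, n.choose p.1 • (f p.1 * g p.2) =
      b * (x * (x + z) ^ n - y * (y + z) ^ n - x * (x + w) ^ n + y * (y + w) ^ n) := by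
  rw [(Commute.all x z).add_pow', (Commute.all y z).add_pow', (Commute.all x w).add_pow',
    (Commute.all y w).add_pow']
  simp only [mul_sum, ← sum_sub_distrib, ← sum_add_distrib]
  refine sum_congr rfl fun p _ => ?_
  simp only [nsmul_eq_mul]
  linear_combination (n.choose p.1 * ((z - w) * g p.2)) * hf p.1 +
    (n.choose p.1 * (x ^ (p.1 + 1) - y ^ (p.1 + 1))) * hg p.2

theorem partial_fractions_two_by_two {R : Type*} [CommRing R]
    {x₁ x₂ y₁ y₂ w₁₁ w₁₂ w₂₁ w₂₂ : R}
    (h₁₁ : (1 - x₁ - y₁) * w₁₁ = 1) (h₁₂ : (1 - x₁ - y₂) * w₁₂ = 1)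
    (h₂₁ : (1 - x₂ - y₁) * w₂₁ = 1) (h₂₂ : (1 - x₂ - y₂) * w₂₂ = 1) :
    (x₁ - x₂) * (y₁ - y₂) * ((1 - x₁ * x₂ - y₁ - y₂ + y₁ * y₂) * (w₁₁ * w₁₂ * w₂₁ * w₂₂)) =
      x₁ * w₁₁ - x₂ * w₂₁ - x₁ * w₁₂ + x₂ * w₂₂ := by
  calc _ = x₁ * w₁₁ * ((1 - x₁ - y₂) * w₁₂ * ((1 - x₂ - y₁) * w₂₁) * ((1 - x₂ - y₂) * w₂₂))
        - x₂ * w₂₁ * ((1 - x₁ - y₁) * w₁₁ * ((1 - x₁ - y₂) * w₁₂) * ((1 - x₂ - y₂) * w₂₂))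
        - x₁ * w₁₂ * ((1 - x₁ - y₁) * w₁₁ * ((1 - x₂ - y₁) * w₂₁) * ((1 - x₂ - y₂) * w₂₂))
        + x₂ * w₂₂ * ((1 - x₁ - y₁) * w₁₁ * ((1 - x₁ - y₂) * w₁₂) * ((1 - x₂ - y₁) * w₂₁)) := by
        ring
    _ = _ := by rw [h₁₁, h₁₂, h₂₁, h₂₂]; ring

section Components

variable {R : Type*} [CommRing R] {N : ℕ}

/-- `f = ∑ₙ c n` with `c n` homogeneous of degree `N * n`. For `0 < N` only the terms with
`n ≤ degree d` can contribute to the coefficient of `d`. -/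
def HasComponents (N : ℕ) (f : MvPowerSeries σ R) (c : ℕ → MvPowerSeries σ R) : Prop :=
  (∀ n, (c n).IsHomogeneous (N * n)) ∧
    ∀ d, coeff d f = ∑ n ∈ range (d.degree + 1), coeff d (c n)

theorem exists_hasComponents {c : ℕ → MvPowerSeries σ R}
    (hc : ∀ n, (c n).IsHomogeneous (N * n)) : ∃ f, HasComponents N f c :=
  ⟨fun d => ∑ n ∈ range (d.degree + 1), coeff d (c n), hc, fun _ => rfl⟩

theorem hasComponents_one :
    HasComponents N (1 : MvPowerSeries σ R) (fun n => if n = 0 then 1 else 0) := by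
  refine ⟨fun n => ?_, fun d => ?_⟩
  · dsimp only
    split_ifs with h
    · rw [h, mul_zero]
      exact isHomogeneous_one
    · exact isHomogeneous_zero _
  · simp only [apply_ite (coeff d), map_zero, sum_ite_eq', mem_range, Nat.zero_lt_succ, if_true]

namespace HasComponents

variable {f g : MvPowerSeries σ R} {c c' : ℕ → MvPowerSeries σ R}

theorem unique (hf : HasComponents N f c) (hg : HasComponents N g c) : f = g := by
  ext d
  rw [hf.2, hg.2]

theorem add (hf : HasComponents N f c) (hg : HasComponents N g c') :
    HasComponents N (f + g) (fun n => c n + c' n) :=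
  ⟨fun n => IsHomogeneous.add (hf.1 n) (hg.1 n), fun d => by
    simp only [map_add, hf.2, hg.2, sum_add_distrib]⟩

theorem coeff_mul_left (hf : HasComponents N f c) (hN : 0 < N) (a : MvPowerSeries σ R)
    (d : σ →₀ ℕ) : coeff d (a * f) = ∑ n ∈ range (d.degree + 1), coeff d (a * c n) := by
  classical
  have expand : ∀ p ∈ antidiagonal d, coeff p.1 a * coeff p.2 f =
      ∑ n ∈ range (d.degree + 1), coeff p.1 a * coeff p.2 (c n) := by
    intro p hp
    have hle : p.2.degree ≤ d.degree := by
      rw [← mem_antidiagonal.1 hp, map_add]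
      omega
    rw [hf.2, mul_sum]
    refine sum_subset (range_subset_range.2 (by omega)) fun n _ hn => ?_
    rw [IsHomogeneous.coeff_eq_zero_of_lt (hf.1 n) (lt_mul_of_one_le_of_lt hN (by simpa using hn)),
      mul_zero]
  simp only [coeff_mul, sum_congr rfl expand]
  exact sum_comm

theorem mul (hf : HasComponents N f c) (hg : HasComponents N g c') (hN : 0 < N) :
    HasComponents N (f * g) (fun n => ∑ p ∈ antidiagonal n, c p.1 * c' p.2) := by
  refine ⟨fun n => isHomogeneous_sum _ _ fun p hp => ?_, fun d => ?_⟩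
  · rw [← mem_antidiagonal.1 hp, mul_add]
    exact IsHomogeneous.mul (hf.1 _) (hg.1 _)
  · rw [mul_comm, hf.coeff_mul_left hN]
    simp only [mul_comm g, hg.coeff_mul_left hN, map_sum]
    refine sum_range_sum_range_eq_sum_antidiagonal _ _ fun k l hkl => ?_
    have hkl' : (c k * c' l).IsHomogeneous (N * (k + l)) := by
      rw [mul_add]
      exact IsHomogeneous.mul (hf.1 k) (hg.1 l)
    exact hkl'.coeff_eq_zero_of_lt (lt_mul_of_one_le_of_lt hN hkl)

theorem mul_left_of_isHomogeneous (hf : HasComponents N f c) (hN : 0 < N)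
    {a : MvPowerSeries σ R} (ha : a.IsHomogeneous N) :
    HasComponents N (a * f) (fun n => a * shiftUp c n) := by
  refine ⟨fun n => ?_, fun d => ?_⟩
  · cases n with
    | zero =>
      simp only [shiftUp, mul_zero]
      exact isHomogeneous_zero _
    | succ n =>
      simp only [shiftUp, Nat.mul_succ, add_comm _ N]
      exact ha.mul (hf.1 n)
  · rw [hf.coeff_mul_left hN, sum_range_succ, sum_range_succ']
    simp only [shiftUp, mul_zero, map_zero, add_zero]
    rw [IsHomogeneous.coeff_eq_zero_of_lt (ha.mul (hf.1 _)) (by nlinarith), add_zero]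

end HasComponents

theorem hasComponents_inv_one_sub {k : Type*} [Field k] {u : MvPowerSeries σ k} (hN : 0 < N)
    (hu : u.IsHomogeneous N) : HasComponents N (1 - u)⁻¹ (u ^ ·) := by
  obtain ⟨S, hS⟩ := exists_hasComponents (N := N) hu.pow
  have hfix : 1 + u * S = S := by
    refine (hasComponents_one.add (hS.mul_left_of_isHomogeneous hN hu)).unique ?_
    convert hS using 1
    funext n
    cases n <;> simp [shiftUp, pow_succ']
  have hinv : S = (1 - u)⁻¹ :=
    (MvPowerSeries.eq_inv_iff_mul_eq_one (hu.constantCoeff_one_sub_ne_zero hN.ne')).2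
      (by linear_combination -hfix)
  exact hinv ▸ hS

end Components

namespace HasComponents

variable {N : ℕ} {f g : MvPowerSeries σ ℚ} {c c' : ℕ → MvPowerSeries σ ℚ}

theorem homComp_eq (hf : HasComponents N f c) (hN : 0 < N) (n : ℕ) : homComp N f n = c n := by
  ext d
  change (if d.degree = N * n then coeff d f else 0) = coeff d (c n)
  split_ifs with h
  · rw [hf.2, sum_eq_single_of_mem n (by simp [h, Nat.le_mul_of_pos_left n hN])]
    refine fun m _ hm => IsHomogeneous.coeff_eq_zero (hf.1 m) ?_
    rw [h]
    exact fun h' => hm (Nat.eq_of_mul_eq_mul_left hN h').symm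
  · exact (IsHomogeneous.coeff_eq_zero (hf.1 n) h).symm

theorem odot (hf : HasComponents N f c) (hg : HasComponents N g c') (hN : 0 < N) :
    HasComponents N (_root_.odot N f g)
      (fun n => ∑ p ∈ antidiagonal n, n.choose p.1 • (c p.1 * c' p.2)) := by
  refine ⟨fun n => isHomogeneous_sum _ _ fun p hp => ?_, fun d => ?_⟩
  · rw [← mem_antidiagonal.1 hp, mul_add]
    exact IsHomogeneous.nsmul (IsHomogeneous.mul (hf.1 _) (hg.1 _)) _
  · change ∑ k ∈ range (d.degree + 1), ∑ l ∈ range (d.degree + 1),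
      ((k + l).choose k : ℚ) * coeff d (homComp N f k * homComp N g l) = _
    simp only [hf.homComp_eq hN, hg.homComp_eq hN, map_sum]
    rw [sum_range_sum_range_eq_sum_antidiagonal _ _ fun k l hkl => ?_]
    · refine sum_congr rfl fun n _ => sum_congr rfl fun p hp => ?_
      rw [mem_antidiagonal.1 hp, map_nsmul, nsmul_eq_mul]
    · have hkl' : (c k * c' l).IsHomogeneous (N * (k + l)) := by
        rw [mul_add]
        exact IsHomogeneous.mul (hf.1 k) (hg.1 l)
      rw [hkl'.coeff_eq_zero_of_lt (lt_mul_of_one_le_of_lt hN hkl), mul_zero]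

end HasComponents

theorem IsHomogDeg.hasComponents_inv_one_sub_sub {N : ℕ} {x y : MvPowerSeries σ ℚ} (hN : 0 < N)
    (hx : IsHomogDeg N x) (hy : IsHomogDeg N y) :
    HasComponents N (1 - x - y)⁻¹ ((x + y) ^ ·) := by
  rw [sub_sub]
  exact hasComponents_inv_one_sub hN (IsHomogeneous.add hx.isHomogeneous_s12 hy.isHomogeneous_s12)

theorem IsHomogDeg.one_sub_sub_mul_inv {N : ℕ} {x y : MvPowerSeries σ ℚ} (hN : 0 < N)
    (hx : IsHomogDeg N x) (hy : IsHomogDeg N y) : (1 - x - y) * (1 - x - y)⁻¹ = 1 := by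
  rw [sub_sub]
  exact MvPowerSeries.mul_inv_cancel _ <|
    IsHomogeneous.constantCoeff_one_sub_ne_zero
      (IsHomogeneous.add hx.isHomogeneous_s12 hy.isHomogeneous_s12) hN.ne'

/-- example `P^{0,1}_{2,2}`:
`((1-u₁)⁻¹(1-u₂)⁻¹) ⊙ (b (1-v₁)⁻¹(1-v₂)⁻¹)
  = b (1 - u₁u₂ - v₁ - v₂ + v₁v₂) ∏_{i,j} (1-u_i-v_j)⁻¹`. -/
theorem odot_example_P01_22 {σ : Type*} (N : ℕ) (hN : 1 ≤ N)
    (u₁ u₂ v₁ v₂ b : MvPowerSeries σ ℚ)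
    (hu₁ : IsHomogDeg N u₁) (hu₂ : IsHomogDeg N u₂)
    (hv₁ : IsHomogDeg N v₁) (hv₂ : IsHomogDeg N v₂) (hb : IsHomogDeg N b)
    (hdist : [u₁ + v₁, u₁ + v₂, u₂ + v₁, u₂ + v₂].Pairwise (· ≠ ·)) :
    odot N ((1 - u₁)⁻¹ * (1 - u₂)⁻¹) (b * ((1 - v₁)⁻¹ * (1 - v₂)⁻¹)) =
      b * (1 - u₁ * u₂ - v₁ - v₂ + v₁ * v₂) *
        ((1 - u₁ - v₁)⁻¹ * (1 - u₁ - v₂)⁻¹ * (1 - u₂ - v₁)⁻¹ * (1 - u₂ - v₂)⁻¹) := by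
  have hU := (hasComponents_inv_one_sub hN hu₁.isHomogeneous_s12).mul
    (hasComponents_inv_one_sub hN hu₂.isHomogeneous_s12) hN
  have hG := ((hasComponents_inv_one_sub hN hv₁.isHomogeneous_s12).mul
    (hasComponents_inv_one_sub hN hv₂.isHomogeneous_s12) hN).mul_left_of_isHomogeneous hN
    hb.isHomogeneous_s12
  have hpiece := sub_mul_sub_mul_sum_antidiagonal_choose
    (b := b) (sub_mul_sum_antidiagonal_pow_mul_pow u₁ u₂) fun j => by
      rw [mul_left_comm, sub_mul_shiftUp_sum_antidiagonal_pow_mul_pow v₁ v₂ j]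
  have hne : ∀ a ∈ [u₁ + v₂, u₂ + v₁, u₂ + v₂], u₁ + v₁ ≠ a := (List.pairwise_cons.1 hdist).1
  have hM : (u₁ - u₂) * (v₁ - v₂) ≠ 0 := mul_ne_zero
    (sub_ne_zero.2 (by simpa using hne (u₂ + v₁) (by simp)))
    (sub_ne_zero.2 (by simpa using hne (u₁ + v₂) (by simp)))
  apply mul_left_cancel₀ hM
  rw [show ∀ P Y : MvPowerSeries σ ℚ, (u₁ - u₂) * (v₁ - v₂) * (b * P * Y) =
      b * ((u₁ - u₂) * (v₁ - v₂) * (P * Y)) from fun _ _ => by ring,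
    partial_fractions_two_by_two (hu₁.one_sub_sub_mul_inv hN hv₁)
      (hu₁.one_sub_sub_mul_inv hN hv₂) (hu₂.one_sub_sub_mul_inv hN hv₁)
      (hu₂.one_sub_sub_mul_inv hN hv₂)]
  ext d
  rw [(hU.odot hG hN).coeff_mul_left hN]
  simp only [hpiece]
  simp only [mul_add, mul_sub, ← mul_assoc, map_add, map_sub, sum_add_distrib, sum_sub_distrib,
    (hu₁.hasComponents_inv_one_sub_sub hN hv₁).coeff_mul_left hN,
    (hu₁.hasComponents_inv_one_sub_sub hN hv₂).coeff_mul_left hN,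
    (hu₂.hasComponents_inv_one_sub_sub hN hv₁).coeff_mul_left hN,
    (hu₂.hasComponents_inv_one_sub_sub hN hv₂).coeff_mul_left hN]
end
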